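/- arXiv:math/0702528 — 5 statements merged into one kernel-verified Lean document; each statement's English description precedes it below -/
import Mathlib

section
/- For any ring R and any R-module M, Hom_R(M, E(R)) = 0 if and only if Hom_R(N, R) = 0 for every submodule N of M. -/
/-- A class of left `R`-modules (in universe 0). -/
def ModuleClass (R : Type) [Ring R] : Type 1 :=
  ∀ (M : Type) [AddCommGroup M] [Module R M], Prop

/-- All `R`-linear maps from `M` to `N` vanish. -/
def HomZero (R : Type) [Ring R] (M N : Type) [AddCommGroup M] [Module R M]
    [AddCommGroup N] [Module R N] : Prop :=
  ∀ f : M →ₗ[R] N, f = 0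

/-- `(T, F)` is a torsion theory for `R`: `Hom_R(T,F) = 0` for all `T ∈ T`, `F ∈ F`,
and `T` and `F` are maximal classes with this property. -/
def IsTorsionTheory (R : Type) [Ring R] (T F : ModuleClass R) : Prop :=
  (∀ (M : Type) [AddCommGroup M] [Module R M] (N : Type) [AddCommGroup N] [Module R N],
      T M → F N → HomZero R M N) ∧
  (∀ (M : Type) [AddCommGroup M] [Module R M],
      (∀ (N : Type) [AddCommGroup N] [Module R N], F N → HomZero R M N) → T M) ∧
  (∀ (N : Type) [AddCommGroup N] [Module R N],
      (∀ (M : Type) [AddCommGroup M] [Module R M], T M → HomZero R M N) → F N)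

/-- `i : M →ₗ[R] E` exhibits `E` as an injective envelope of `M`: `E` is an injective
module and `M` embeds in `E` as an essential submodule. -/
def IsInjectiveEnvelope (R : Type) [Ring R] (M E : Type) [AddCommGroup M] [Module R M]
    [AddCommGroup E] [Module R E] (i : M →ₗ[R] E) : Prop :=
  Function.Injective i ∧ Module.Injective R E ∧
    ∀ N : Submodule R E, N ≠ ⊥ → N ⊓ LinearMap.range i ≠ ⊥

/-- for any ring `R` and any `R`-module `M`, `Hom_R(M, E(R)) = 0` if and only
if `Hom_R(N, R) = 0` for every submodule `N` of `M`, where `E(R)` is the injective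
envelope of `R` as a left module over itself. -/
theorem homZero_injectiveEnvelope_iff (R : Type) [Ring R] (E : Type) [AddCommGroup E]
    [Module R E] (i : R →ₗ[R] E) (hE : IsInjectiveEnvelope R R E i)
    (M : Type) [AddCommGroup M] [Module R M] :
    HomZero R M E ↔ ∀ N : Submodule R M, HomZero R ↥N R := by
  obtain ⟨hinj, hInjE, hess⟩ := hE
  constructor
  · intro h N f
    obtain ⟨g, hg⟩ := hInjE.out N.subtype Subtype.coe_injective (i ∘ₗ f)
    have hg0 : g = 0 := h g
    ext x
    apply hinj
    have := hg x
    simp only [hg0, LinearMap.zero_apply, LinearMap.comp_apply] at this ⊢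
    rw [← this]
    simp [map_zero]
  · intro h g
    by_contra hg
    -- range g ≠ ⊥
    have hrg : LinearMap.range g ≠ ⊥ := by
      intro hb
      apply hg
      ext x
      have : g x ∈ LinearMap.range g := ⟨x, rfl⟩
      rw [hb] at this
      simpa using this
    have hne := hess _ hrg
    obtain ⟨y, hy, hy0⟩ := Submodule.exists_mem_ne_zero_of_ne_bot hne
    obtain ⟨⟨x, hxg⟩, hyr⟩ := hy
    -- N := preimage of range i under g
    set N : Submodule R M := Submodule.comap g (LinearMap.range i) with hN
    have hxN : x ∈ N := by
      simp only [hN, Submodule.mem_comap, hxg]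
      exact hyr
    let e : R ≃ₗ[R] LinearMap.range i := LinearEquiv.ofInjective i hinj
    let φ : ↥N →ₗ[R] ↥(LinearMap.range i) := g.restrict (fun m hm => hm)
    have hf := h N (e.symm.toLinearMap ∘ₗ φ)
    have := congrArg (fun f => f ⟨x, hxN⟩) hf
    simp only [LinearMap.comp_apply, LinearMap.zero_apply] at this
    have hφ : (φ ⟨x, hxN⟩ : E) = y := by simp [φ, LinearMap.restrict_apply, hxg]
    apply hy0
    have h0 : φ ⟨x, hxN⟩ = 0 := by
      have := congrArg e this
      simpa using this
    rw [← hφ, h0]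
    rfl
end

section
/- Let R be a ring, (bnd, unb) the torsion theory cogenerated by R, and τ_L the Lambek torsion theory (cogenerated by E(R)). Then (bnd, unb) = τ_L if and only if (bnd, unb) is hereditary. -/
/-- The torsion theory `(T,F)` is cogenerated by the module `C`: it is the largest torsion
theory in which `C` is torsion-free. -/
def IsCogeneratedBy (R : Type) [Ring R] (T F : ModuleClass R) (C : Type) [AddCommGroup C]
    [Module R C] : Prop :=
  IsTorsionTheory R T F ∧ F C ∧
    ∀ (T' F' : ModuleClass R), IsTorsionTheory R T' F' → F' C →
      ∀ (M : Type) [AddCommGroup M] [Module R M], T' M → T M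


/-!
Both theories are cogenerated by a single module, so their torsion classes are
`{M | Hom(M, R) = 0}` and `{M | Hom(M, E(R)) = 0}`. The second is hereditary because `E(R)`
is injective. Conversely, if `{M | Hom(M, R) = 0}` is hereditary and `f : M → E(R)` is nonzero,
essentiality of `R ≤ E(R)` makes `f` nonzero on `f⁻¹(R)`, giving a nonzero map from a submodule
of `M` to `R`. Equal torsion classes force equal torsion-free classes.
-/

section HomZero

variable {R : Type} [Ring R] {M N C E : Type} [AddCommGroup M] [Module R M]
  [AddCommGroup N] [Module R N] [AddCommGroup C] [Module R C] [AddCommGroup E] [Module R E]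

theorem HomZero.of_injective_right (hME : HomZero R M E) (j : C →ₗ[R] E)
    (hj : Function.Injective j) : HomZero R M C := fun f =>
  LinearMap.ext fun x => hj <| by simpa using LinearMap.congr_fun (hME (j ∘ₗ f)) x

theorem HomZero.of_injective_left [Module.Injective R E] (hME : HomZero R M E)
    (f : N →ₗ[R] M) (hf : Function.Injective f) : HomZero R N E := fun g => by
  obtain ⟨h, hh⟩ := Module.Injective.out f hf g
  ext x
  simpa [hME h] using (hh x).symm

theorem homZero_of_essential (i : C →ₗ[R] E) (hi : Function.Injective i)
    (hess : ∀ P : Submodule R E, P ≠ ⊥ → P ⊓ LinearMap.range i ≠ ⊥)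
    (hM : ∀ P : Submodule R M, HomZero R P C) : HomZero R M E := by
  intro f
  by_contra hf
  obtain ⟨_, ⟨⟨m, rfl⟩, hmi⟩, hfm⟩ := Submodule.exists_mem_ne_zero_of_ne_bot
    (hess _ (mt LinearMap.range_eq_bot.mp hf))
  let P := (LinearMap.range i).comap f
  let g : P →ₗ[R] C := (LinearEquiv.ofInjective i hi).symm.toLinearMap ∘ₗ
    f.restrict (q := LinearMap.range i) fun _ hx => hx
  have hfg : f m = i (g ⟨m, hmi⟩) := by
    simp [g, LinearEquiv.ofInjective_symm_apply]
  exact hfm (by rw [hfg, hM P g]; simp)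

end HomZero

section TorsionTheory

variable {R : Type} [Ring R]

def cogenTorsion (R : Type) [Ring R] (C : Type) [AddCommGroup C] [Module R C] :
    ModuleClass R :=
  fun M _ _ => HomZero R M C

def cogenTorsionFree (R : Type) [Ring R] (C : Type) [AddCommGroup C] [Module R C] :
    ModuleClass R :=
  fun N _ _ => ∀ (M : Type) [AddCommGroup M] [Module R M], HomZero R M C → HomZero R M N

theorem isTorsionTheory_cogenTorsion (C : Type) [AddCommGroup C] [Module R C] :
    IsTorsionTheory R (cogenTorsion R C) (cogenTorsionFree R C) :=
  ⟨fun M _ _ _ _ _ hM hN => hN M hM,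
    fun _ _ _ h => h C fun _ _ _ hM => hM,
    fun _ _ _ h M _ _ hM => h M hM⟩

theorem IsCogeneratedBy.torsion_iff {T F : ModuleClass R} {C : Type} [AddCommGroup C]
    [Module R C] (h : IsCogeneratedBy R T F C) (M : Type) [AddCommGroup M] [Module R M] :
    T M ↔ HomZero R M C :=
  ⟨fun hM => h.1.1 M C hM h.2.1,
    h.2.2 _ _ (isTorsionTheory_cogenTorsion C) (fun _ _ _ hM => hM) M⟩

theorem IsTorsionTheory.free_iff_of_torsion_iff {T F T' F' : ModuleClass R}
    (h : IsTorsionTheory R T F) (h' : IsTorsionTheory R T' F')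
    (hT : ∀ (M : Type) [AddCommGroup M] [Module R M], T M ↔ T' M)
    (N : Type) [AddCommGroup N] [Module R N] : F N ↔ F' N :=
  ⟨fun hN => h'.2.2 N fun M _ _ hM => h.1 M N ((hT M).2 hM) hN,
    fun hN => h.2.2 N fun M _ _ hM => h'.1 M N ((hT M).1 hM) hN⟩

end TorsionTheory

/-- let `(bnd, unb)` be the torsion theory cogenerated by `R` and `τ_L` the
Lambek torsion theory (cogenerated by the injective envelope `E(R)`). Then
`(bnd, unb) = τ_L` if and only if `(bnd, unb)` is hereditary. -/
theorem bnd_eq_lambek_iff_hereditary (R : Type) [Ring R] (bT bF lT lF : ModuleClass R)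
    (hb : IsCogeneratedBy R bT bF R)
    (E : Type) [AddCommGroup E] [Module R E] (i : R →ₗ[R] E)
    (hE : IsInjectiveEnvelope R R E i)
    (hl : IsCogeneratedBy R lT lF E) :
    ((∀ (M : Type) [AddCommGroup M] [Module R M], bT M ↔ lT M) ∧
     (∀ (M : Type) [AddCommGroup M] [Module R M], bF M ↔ lF M)) ↔
      (∀ (M : Type) [AddCommGroup M] [Module R M] (N : Type) [AddCommGroup N] [Module R N]
        (f : N →ₗ[R] M), Function.Injective f → bT M → bT N) := by
  obtain ⟨hi, hEinj, hess⟩ := hE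
  constructor
  · rintro ⟨hT, -⟩ M _ _ N _ _ f hf hM
    rw [hT, hl.torsion_iff] at hM ⊢
    exact hM.of_injective_left f hf
  · intro hered
    have hT : ∀ (M : Type) [AddCommGroup M] [Module R M], bT M ↔ lT M := by
      intro M _ _
      rw [hb.torsion_iff, hl.torsion_iff]
      refine ⟨fun hM => homZero_of_essential i hi hess fun P => ?_,
        fun hM => hM.of_injective_right i hi⟩
      rw [← hb.torsion_iff]
      exact hered M P P.subtype P.injective_subtype ((hb.torsion_iff M).2 hM)
    exact ⟨hT, hb.1.free_iff_of_torsion_iff hl.1 hT⟩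
end

section
/- The Lambek torsion theory τ_L equals the Goldie torsion theory τ_G if and only if the ring R is nonsingular. -/
/-- A left ideal `I` of `R` is essential: it intersects every nonzero left ideal
nontrivially. -/
def IsEssentialIdeal (R : Type) [Ring R] (I : Submodule R R) : Prop :=
  ∀ J : Submodule R R, J ≠ ⊥ → I ⊓ J ≠ ⊥

/-- `M` is a nonsingular module: its singular submodule
`Z(M) = {m | ann(m) is an essential left ideal}` is zero. -/
def IsNonsingularModule (R : Type) [Ring R] (M : Type) [AddCommGroup M] [Module R M] :
    Prop :=
  ∀ m : M, IsEssentialIdeal R (LinearMap.ker (LinearMap.toSpanSingleton R M m)) → m = 0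

section Aux

variable {R : Type} [Ring R]

lemma ess_mono {I I' : Submodule R R} (h : I ≤ I') (hI : IsEssentialIdeal R I) :
    IsEssentialIdeal R I' := by
  intro J hJ hcon
  exact hI J hJ (le_antisymm (hcon ▸ inf_le_inf_right J h) bot_le)

lemma ess_colon {I : Submodule R R} (hI : IsEssentialIdeal R I) (r : R) :
    IsEssentialIdeal R (I.comap (LinearMap.toSpanSingleton R R r)) := by
  intro J hJ hcon
  by_cases hK : J.map (LinearMap.toSpanSingleton R R r) = ⊥
  · -- every element of J lands in kernel, so J ≤ comap
    apply hJ
    rw [← hcon, eq_comm, inf_eq_right]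
    intro x hx
    have : LinearMap.toSpanSingleton R R r x ∈ J.map (LinearMap.toSpanSingleton R R r) :=
      Submodule.mem_map_of_mem hx
    rw [hK] at this
    simp only [Submodule.mem_bot] at this
    simp [Submodule.mem_comap, this]
  · obtain ⟨y, hy, hy0⟩ := Submodule.exists_mem_ne_zero_of_ne_bot
      (show I ⊓ J.map (LinearMap.toSpanSingleton R R r) ≠ ⊥ from hI _ hK)
    obtain ⟨hyI, x, hxJ, hxy⟩ := hy
    have hx0 : x ≠ 0 := by
      rintro rfl
      exact hy0 (by simpa using hxy.symm)
    have : x ∈ (I.comap (LinearMap.toSpanSingleton R R r)) ⊓ J :=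
      ⟨by simpa [Submodule.mem_comap, hxy] using hyI, hxJ⟩
    rw [hcon] at this
    exact hx0 (by simpa using this)

lemma nonsingular_of_inj {M N : Type} [AddCommGroup M] [Module R M]
    [AddCommGroup N] [Module R N] (i : M →ₗ[R] N) (hi : Function.Injective i)
    (hN : IsNonsingularModule R N) : IsNonsingularModule R M := by
  intro m hm
  have hle : LinearMap.ker (LinearMap.toSpanSingleton R M m) ≤
      LinearMap.ker (LinearMap.toSpanSingleton R N (i m)) := by
    intro x hx
    simp only [LinearMap.mem_ker, LinearMap.toSpanSingleton_apply] at hx ⊢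
    rw [← map_smul, hx, map_zero]
  have := hN (i m) (ess_mono hle hm)
  exact hi (by simpa using this)

lemma env_nonsingular {E : Type} [AddCommGroup E] [Module R E] (i : R →ₗ[R] E)
    (hE : IsInjectiveEnvelope R R E i) (hR : IsNonsingularModule R R) :
    IsNonsingularModule R E := by
  intro e he
  by_contra he0
  have hne : LinearMap.range (LinearMap.toSpanSingleton R E e) ≠ ⊥ := by
    intro h
    apply he0
    have : LinearMap.toSpanSingleton R E e 1 ∈
        LinearMap.range (LinearMap.toSpanSingleton R E e) := LinearMap.mem_range_self _ 1
    rw [h] at this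
    simpa using this
  obtain ⟨y, hy, hy0⟩ := Submodule.exists_mem_ne_zero_of_ne_bot (hE.2.2 _ hne)
  obtain ⟨⟨r, hre⟩, s, hse⟩ := hy
  simp only [LinearMap.toSpanSingleton_apply] at hre
  -- y = r • e = i s, with ann(s) essential hence s = 0
  have hess : IsEssentialIdeal R (LinearMap.ker (LinearMap.toSpanSingleton R R s)) := by
    apply ess_mono _ (ess_colon he r)
    intro x hx
    simp only [Submodule.mem_comap, LinearMap.mem_ker, LinearMap.toSpanSingleton_apply] at hx ⊢
    have : x • y = 0 := by rw [← hre, smul_smul] at *; simpa using hx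
    rw [← hse, ← map_smul] at this
    have h0 : i (x • s) = i 0 := by simpa using this
    simpa using hE.1 h0
  have : s = 0 := hR s hess
  rw [this, map_zero] at hse
  exact hy0 hse.symm

lemma homzero_of_nonsingular {E : Type} [AddCommGroup E] [Module R E] (i : R →ₗ[R] E)
    (hE : IsInjectiveEnvelope R R E i)
    {M N : Type} [AddCommGroup M] [Module R M] [AddCommGroup N] [Module R N]
    (hMZ : HomZero R M E) (hN : IsNonsingularModule R N) : HomZero R M N := by
  intro f
  by_contra hf
  have : ∃ m : M, f m ≠ 0 := by
    by_contra h
    push_neg at h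
    exact hf (LinearMap.ext fun m => by simp [h m])
  obtain ⟨m, hm⟩ := this
  set n := f m with hn
  have hness : ¬ IsEssentialIdeal R (LinearMap.ker (LinearMap.toSpanSingleton R N n)) :=
    fun h => hm (hN n h)
  rw [IsEssentialIdeal] at hness
  push_neg at hness
  obtain ⟨J, hJ, hJann⟩ := hness
  -- φ : J → N, j ↦ j • n is injective
  set φ : J →ₗ[R] N := (LinearMap.toSpanSingleton R N n).comp J.subtype with hφ
  have hφinj : Function.Injective φ := by
    rw [← LinearMap.ker_eq_bot]
    ext ⟨x, hx⟩
    simp only [LinearMap.mem_ker, hφ, LinearMap.comp_apply, Submodule.subtype_apply,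
      Submodule.mem_bot, Submodule.mk_eq_zero]
    constructor
    · intro h
      have : x ∈ LinearMap.ker (LinearMap.toSpanSingleton R N n) ⊓ J := ⟨h, hx⟩
      rw [hJann] at this
      simpa using this
    · rintro rfl; simp
  set e₁ := LinearEquiv.ofInjective φ hφinj with he₁
  set g : (LinearMap.range φ) →ₗ[R] E := (i.comp J.subtype).comp e₁.symm.toLinearMap with hg
  obtain ⟨h, hh⟩ := hE.2.1.out (LinearMap.range φ).subtype Subtype.coe_injective g
  have hhf : h.comp f = 0 := hMZ _
  obtain ⟨j, hjJ, hj0⟩ := Submodule.exists_mem_ne_zero_of_ne_bot hJ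
  have key : h (f (j • m)) = i j := by
    have h1 : f (j • m) = φ ⟨j, hjJ⟩ := by
      simp [hφ, map_smul, hn]
    have h2 : φ ⟨j, hjJ⟩ = (LinearMap.range φ).subtype (e₁ ⟨j, hjJ⟩) := by
      simp [he₁]
    rw [h1, h2, hh, hg]
    simp [he₁]
  have : h (f (j • m)) = 0 := by
    have := LinearMap.congr_fun hhf (j • m)
    simpa using this
  rw [key] at this
  exact hj0 (hE.1 (by simpa using this))

end Aux

/-- the Lambek torsion theory `τ_L` (cogenerated by `E(R)`) equals the
Goldie torsion theory `τ_G` (the torsion theory whose torsion-free class is the class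
of nonsingular modules) if and only if the ring `R` is nonsingular. -/
theorem lambek_eq_goldie_iff_nonsingular (R : Type) [Ring R] (lT lF gT gF : ModuleClass R)
    (E : Type) [AddCommGroup E] [Module R E] (i : R →ₗ[R] E)
    (hE : IsInjectiveEnvelope R R E i)
    (hl : IsCogeneratedBy R lT lF E)
    (hg : IsTorsionTheory R gT gF)
    (hgF : ∀ (M : Type) [AddCommGroup M] [Module R M], gF M ↔ IsNonsingularModule R M) :
    ((∀ (M : Type) [AddCommGroup M] [Module R M], lT M ↔ gT M) ∧
     (∀ (M : Type) [AddCommGroup M] [Module R M], lF M ↔ gF M)) ↔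
      IsNonsingularModule R R := by
  constructor
  · rintro ⟨hT, hF⟩
    have hEns : IsNonsingularModule R E := (hgF E).mp ((hF E).mp hl.2.1)
    exact nonsingular_of_inj i hE.1 hEns
  · intro hR
    have hEns : IsNonsingularModule R E := env_nonsingular i hE hR
    -- gT M → lT M via cogeneration maximality
    have hgl : ∀ (M : Type) [AddCommGroup M] [Module R M], gT M → lT M :=
      hl.2.2 gT gF hg ((hgF E).mpr hEns)
    -- lT M → gT M
    have hlg : ∀ (M : Type) [AddCommGroup M] [Module R M], lT M → gT M := by
      intro M _ _ hM
      apply hg.2.1 M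
      intro N _ _ hN
      exact homzero_of_nonsingular i hE (hl.1.1 M E hM hl.2.1) ((hgF N).mp hN)
    refine ⟨fun M _ _ => ⟨hlg M, hgl M⟩, fun N _ _ => ?_⟩
    constructor
    · intro hN
      exact hg.2.2 N (fun M _ _ hM => hl.1.1 M N (hgl M hM) hN)
    · intro hN
      exact hl.1.2.2 N (fun M _ _ hM => hg.1 M N (hlg M hM) hN)
end

section
/- Let U be a von Neumann regular, left self-injective ring, P a finitely generated projective U-module, and K a submodule of P. Then the closure cl_bnd(K) = {x ∈ P : f(x)=0 for all f ∈ Hom_U(P,U) with K ⊆ ker f} is a finitely generated projective direct summand of P, and equals the supremum in the lattice of finitely generated submodules of P of all finitely generated submodules Q of P contained in K. -/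
/-!
Write `C = cl_bnd(K)`. Choose `D` maximal with `C ⊓ D = ⊥`, so that `C ⊕ D` is essential in `P`.
As a retract of `Uⁿ` with `U` self-injective, `P` is injective, so the projection `C ⊕ D → C`
extends to `g : P → P`. If `f : P → U` vanishes on `K`, then `f ∘ g` vanishes on the essential
submodule `C ⊕ D`, hence is zero because a von Neumann regular ring is nonsingular. Thus `g` maps
`P` onto `C` and fixes `C`: `C` is a direct summand of `P`, hence finitely generated and projective.
Conversely, over a von Neumann regular ring every finitely generated submodule `N` of `P` is a
direct summand, so a point outside `N` is separated from `N` by a functional `P → U`; hence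
`C ≤ N` as soon as `K ≤ N`.
-/

/-- The closure `cl_bnd(K)` of a submodule `K` of `P` in the torsion theory cogenerated by
the ring `U`: the intersection of the kernels of all homomorphisms `P → U` vanishing
on `K`, i.e. `{x ∈ P | f x = 0 for all f ∈ Hom_U(P,U) with K ⊆ ker f}`. -/
def bndClosure (U : Type) [Ring U] {P : Type} [AddCommGroup P] [Module U P]
    (K : Submodule U P) : Submodule U P :=
  sInf {N : Submodule U P | ∃ f : P →ₗ[U] U, K ≤ LinearMap.ker f ∧ N = LinearMap.ker f}

open Submodule LinearMap

theorem IsCompl.sup_inf_of_le {α : Type*} [Lattice α] [BoundedOrder α] [IsModularLattice α]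
    {a b x w : α} (hab : IsCompl a b) (hxb : x ≤ b) (hxw : IsCompl x w) :
    IsCompl (a ⊔ x) (b ⊓ w) := by
  refine Disjoint.isCompl_sup_left_of_isCompl_sup_right (hxw.disjoint.mono_right inf_le_right) ?_
  rwa [inf_comm, ← sup_inf_assoc_of_le w hxb, hxw.sup_eq_top, top_inf_eq]

theorem exists_maximal_disjoint {α : Type*} [CompleteLattice α] [IsCompactlyGenerated α]
    (a : α) : ∃ b, Maximal (Disjoint a) b := by
  refine zorn_le₀ {b | Disjoint a b} fun c hc hchain => ⟨sSup c, ?_, fun _ => le_sSup⟩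
  show Disjoint a (sSup c)
  rw [disjoint_iff, hchain.directedOn.inf_sSup_eq]
  exact iSup₂_eq_bot.mpr fun b hb => (hc hb).eq_bot

universe u v

theorem Module.Injective.of_split {R : Type u} [Ring R] {M Q : Type v} [AddCommGroup M]
    [Module R M] [AddCommGroup Q] [Module R Q] [Module.Injective R Q]
    (s : M →ₗ[R] Q) (r : Q →ₗ[R] M) (hrs : r ∘ₗ s = LinearMap.id) : Module.Injective R M :=
  ⟨fun _ _ _ _ _ _ f hf g => by
    obtain ⟨h, hh⟩ := Module.Injective.out f hf (s ∘ₗ g)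
    exact ⟨r ∘ₗ h, fun x => by simpa [hh] using LinearMap.congr_fun hrs (g x)⟩⟩

theorem Module.Injective.exists_extension_of_disjoint {R : Type u} [Ring R] {M : Type v}
    [AddCommGroup M] [Module R M] [Module.Injective R M] {p q : Submodule R M}
    (h : Disjoint p q) : ∃ g : M →ₗ[R] M, (∀ x ∈ p, g x = x) ∧ ∀ x ∈ q, g x = 0 := by
  have hinj : Function.Injective (p.subtype.coprod q.subtype) := by
    rw [← LinearMap.ker_eq_bot, ker_coprod_of_disjoint_range _ _ (by simpa using h)]
    simp
  obtain ⟨g, hg⟩ := Module.Injective.out _ hinj (p.subtype ∘ₗ LinearMap.fst R p q)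
  exact ⟨g, fun x hx => by simpa using hg (⟨x, hx⟩, 0), fun x hx => by simpa using hg (0, ⟨x, hx⟩)⟩

variable {R M N : Type*} [Ring R] [AddCommGroup M] [Module R M] [AddCommGroup N] [Module R N]

def Submodule.IsEssential (S : Submodule R M) : Prop :=
  ∀ x : M, x ≠ 0 → ∃ r : R, r • x ≠ 0 ∧ r • x ∈ S

theorem Submodule.isEssential_sup_of_maximal_disjoint {C D : Submodule R M}
    (hD : Maximal (Disjoint C) D) : (C ⊔ D).IsEssential := by
  intro x hx
  by_contra! h
  have hdisj : Disjoint (C ⊔ D) (R ∙ x) := by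
    rw [Submodule.disjoint_def]
    rintro _ hy hyx
    obtain ⟨r, rfl⟩ := mem_span_singleton.mp hyx
    by_contra hr
    exact h r hr hy
  have hxD : R ∙ x ≤ D :=
    le_sup_right.trans (hD.2 (hD.1.disjoint_sup_right_of_disjoint_sup_left hdisj) le_sup_left)
  exact hx (span_singleton_eq_bot.mp (hdisj.symm.eq_bot_of_le (hxD.trans le_sup_right)))

theorem LinearMap.eq_zero_of_isEssential_le_ker (hreg : ∀ a : R, ∃ x : R, a * x * a = a)
    {S : Submodule R M} (hS : S.IsEssential) {f : M →ₗ[R] R} (hf : S ≤ ker f) : f = 0 := by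
  ext m
  obtain ⟨x, hx⟩ := hreg (f m)
  set y := (f m * x) • m
  have hfy : f y = f m := by simp [y, hx]
  by_contra hm
  obtain ⟨r, hry, hrS⟩ := hS y fun hy => hm (by rw [← hfy, hy, map_zero]; rfl)
  have hr : r * f m = 0 := by rw [← hfy, ← smul_eq_mul, ← map_smul]; exact hf hrS
  exact hry (by rw [smul_smul, ← mul_assoc, hr, zero_mul, zero_smul])

theorem Submodule.projective_of_isCompl [Module.Projective R M] {p q : Submodule R M}
    (h : IsCompl p q) : Module.Projective R p :=
  Module.Projective.of_split p.subtype (p.projectionOnto q h) (p.projectionOnto_comp_subtype h)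

variable (R M) in
def FGComplemented : Prop :=
  ∀ N : Submodule R M, N.FG → IsComplemented N

theorem FGComplemented.of_injective (f : M →ₗ[R] N) (hf : Function.Injective f)
    (h : FGComplemented R N) : FGComplemented R M := by
  intro L hL
  obtain ⟨W, hW⟩ := h _ (hL.map f)
  refine ⟨W.comap f, ?_, ?_⟩
  · rw [Submodule.disjoint_def]
    intro x hxL hxW
    exact hf (by simpa using Submodule.disjoint_def.mp hW.disjoint _ (mem_map_of_mem hxL) hxW)
  · rw [codisjoint_iff, eq_top_iff]
    intro x _
    obtain ⟨_, ⟨y, hy, rfl⟩, w, hw, hyw⟩ := mem_sup.mp (hW.sup_eq_top ▸ mem_top : f x ∈ _)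
    refine mem_sup.mpr ⟨y, hy, x - y, ?_, add_sub_cancel y x⟩
    simpa [mem_comap, map_sub, ← hyw] using hw

theorem Submodule.IsComplemented.sup_span_singleton
    (hcyc : ∀ x : M, IsComplemented (R ∙ x)) {L : Submodule R M} (hL : IsComplemented L)
    (c : M) : IsComplemented (L ⊔ R ∙ c) := by
  obtain ⟨B, hLB⟩ := hL
  obtain ⟨l, hl, b, hb, rfl⟩ := mem_sup.mp (hLB.sup_eq_top ▸ mem_top : c ∈ L ⊔ B)
  have hsup : L ⊔ R ∙ (l + b) = L ⊔ R ∙ b := by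
    refine le_antisymm (sup_le le_sup_left ?_) (sup_le le_sup_left ?_) <;>
      rw [span_singleton_le_iff_mem]
    · exact add_mem (mem_sup_left hl) (mem_sup_right (mem_span_singleton_self b))
    · simpa using sub_mem (mem_sup_right (mem_span_singleton_self (l + b)))
        (mem_sup_left hl : l ∈ L ⊔ R ∙ (l + b))
  obtain ⟨W, hbW⟩ := hcyc b
  exact hsup ▸ ⟨B ⊓ W, hLB.sup_inf_of_le ((span_singleton_le_iff_mem b B).mpr hb) hbW⟩

theorem FGComplemented.of_isComplemented_span_singleton
    (hcyc : ∀ x : M, IsComplemented (R ∙ x)) : FGComplemented R M := by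
  classical
  rintro _ ⟨s, rfl⟩
  induction s using Finset.induction_on with
  | empty => simpa using isComplemented_bot
  | insert c s _ ih =>
    rw [Finset.coe_insert, span_insert, sup_comm]
    exact ih.sup_span_singleton hcyc c

theorem fgComplemented_self (hreg : ∀ a : R, ∃ x : R, a * x * a = a) : FGComplemented R R := by
  refine FGComplemented.of_isComplemented_span_singleton fun a => ?_
  obtain ⟨x, hx⟩ := hreg a
  -- `a * x * a = a` makes right multiplication by `x * a` a projection onto `R ∙ a`.
  refine ⟨_, (?_ : IsProj (R ∙ a) (LinearMap.toSpanSingleton R R (x * a))).isCompl⟩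
  refine ⟨fun u => mem_span_singleton.mpr ⟨u * x, by simp [mul_assoc]⟩, fun y hy => ?_⟩
  obtain ⟨r, rfl⟩ := mem_span_singleton.mp hy
  simp [mul_assoc, ← mul_assoc a, hx]

theorem Submodule.isCompl_prod_of_isCompl_map_fst_of_isCompl_comap_inr {L : Submodule R (M × N)}
    {J : Submodule R M} {W : Submodule R N} (hJ : IsCompl (L.map (LinearMap.fst R M N)) J)
    (hW : IsCompl (L.comap (LinearMap.inr R M N)) W) : IsCompl L (J.prod W) := by
  constructor
  · rw [Submodule.disjoint_def]
    rintro ⟨j, w⟩ hL ⟨hj, hw⟩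
    have hj0 : j = 0 := Submodule.disjoint_def.mp hJ.disjoint j ⟨_, hL, rfl⟩ hj
    subst hj0
    simpa using Submodule.disjoint_def.mp hW.disjoint w hL hw
  · rw [codisjoint_iff, eq_top_iff]
    rintro ⟨m, n⟩ -
    obtain ⟨_, ⟨l, hl, rfl⟩, j, hj, hlj⟩ := mem_sup.mp (hJ.sup_eq_top ▸ mem_top : m ∈ _)
    obtain ⟨l₀, hl₀, w, hw, hlw⟩ := mem_sup.mp (hW.sup_eq_top ▸ mem_top : n - l.2 ∈ _)
    refine mem_sup.mpr ⟨l + (0, l₀), add_mem hl hl₀, (j, w), ⟨hj, hw⟩, ?_⟩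
    ext
    · simpa [add_comm] using hlj
    · simp only [Prod.snd_add]; rw [add_assoc, hlw]; abel

theorem Submodule.FG.comap_inr {L : Submodule R (M × N)} (hL : L.FG)
    [Module.Projective R (L.map (LinearMap.fst R M N))] : (L.comap (LinearMap.inr R M N)).FG := by
  have := Module.Finite.iff_fg.mpr hL
  obtain ⟨σ, hσ⟩ := ((LinearMap.fst R M N).submoduleMap L).exists_rightInverse_of_surjective
    (range_eq_top.mpr ((LinearMap.fst R M N).submoduleMap_surjective L))
  have hσfst : ∀ i, ((σ i : L) : M × N).1 = i := fun i =>
    congrArg Subtype.val (LinearMap.congr_fun hσ i)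
  set ρ : L →ₗ[R] L := LinearMap.id - σ ∘ₗ (LinearMap.fst R M N).submoduleMap L
  -- `ρ` maps `L` onto its part `L ⊓ (0 × N)`, since `σ` lifts `fst` along `L`.
  suffices L.comap (LinearMap.inr R M N) = range (LinearMap.snd R M N ∘ₗ L.subtype ∘ₗ ρ) from
    this ▸ fg_range _
  ext n
  constructor
  · intro hn
    refine ⟨⟨(0, n), hn⟩, ?_⟩
    have : (LinearMap.fst R M N).submoduleMap L ⟨(0, n), hn⟩ = 0 := Subtype.ext rfl
    simp [ρ, this]
  · rintro ⟨l, rfl⟩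
    have hρ : ((ρ l : L) : M × N) = (0, (ρ l : M × N).2) := by
      ext
      · simp [ρ, hσfst]
      · rfl
    simp [mem_comap, ← hρ]

theorem FGComplemented.prod [Module.Projective R M] (hM : FGComplemented R M)
    (hN : FGComplemented R N) : FGComplemented R (M × N) := by
  intro L hL
  obtain ⟨J, hJ⟩ := hM _ (hL.map (LinearMap.fst R M N))
  have := projective_of_isCompl hJ
  obtain ⟨W, hW⟩ := hN _ hL.comap_inr
  exact ⟨J.prod W, isCompl_prod_of_isCompl_map_fst_of_isCompl_comap_inr hJ hW⟩

theorem fgComplemented_fin (hreg : ∀ a : R, ∃ x : R, a * x * a = a) (n : ℕ) :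
    FGComplemented R (Fin n → R) := by
  induction n with
  | zero => exact fun L _ => Subsingleton.elim L ⊥ ▸ isComplemented_bot
  | succ n ih =>
    exact ((fgComplemented_self hreg).prod ih).of_injective
      (Fin.consLinearEquiv R fun _ => R).symm.toLinearMap (LinearEquiv.injective _)

theorem fgComplemented_of_projective (hreg : ∀ a : R, ∃ x : R, a * x * a = a)
    [Module.Finite R M] [Module.Projective R M] : FGComplemented R M := by
  obtain ⟨n, f, hf⟩ := Module.Finite.exists_fin' R M
  obtain ⟨s, hs⟩ := f.exists_rightInverse_of_surjective (range_eq_top.mpr hf)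
  exact (fgComplemented_fin hreg n).of_injective s (LinearMap.injective_of_comp_eq_id s f hs)

section bndClosure

variable {U : Type} [Ring U] {P : Type} [AddCommGroup P] [Module U P]

theorem mem_bndClosure {K : Submodule U P} {x : P} :
    x ∈ bndClosure U K ↔ ∀ f : P →ₗ[U] U, K ≤ ker f → f x = 0 :=
  ⟨fun h f hf => mem_sInf.mp h _ ⟨f, hf, rfl⟩,
    fun h => mem_sInf.mpr fun _ ⟨f, hf, hN⟩ => hN ▸ h f hf⟩

theorem le_bndClosure (K : Submodule U P) : K ≤ bndClosure U K :=
  fun _ hx => mem_bndClosure.mpr fun _ hf => hf hx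

theorem exists_isProj_bndClosure (hreg : ∀ a : U, ∃ x : U, a * x * a = a)
    [Module.Injective U P] (K : Submodule U P) : ∃ g : P →ₗ[U] P, IsProj (bndClosure U K) g := by
  set C := bndClosure U K
  obtain ⟨D, hD⟩ := exists_maximal_disjoint C
  obtain ⟨g, hgC, hgD⟩ := Module.Injective.exists_extension_of_disjoint hD.1
  refine ⟨g, fun m => mem_bndClosure.mpr fun f hKf => ?_, hgC⟩
  have hfC : C ≤ ker f := fun x hx => mem_bndClosure.mp hx f hKf
  have hCD : C ⊔ D ≤ ker (f ∘ₗ g) :=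
    sup_le (fun c hc => by simpa [hgC c hc] using hfC hc) (fun d hd => by simp [hgD d hd])
  have hfg : f ∘ₗ g = 0 :=
    eq_zero_of_isEssential_le_ker hreg (isEssential_sup_of_maximal_disjoint hD) hCD
  exact LinearMap.congr_fun hfg m

theorem bndClosure_le_of_isCompl [Module.Projective U P] {K N W : Submodule U P} (hKN : K ≤ N)
    (hNW : IsCompl N W) : bndClosure U K ≤ N := by
  intro x hx
  by_contra hxN
  have hpx : (W.projectionOnto N hNW.symm x : P) ≠ 0 := by
    simpa [projectionOnto_apply_eq_zero_iff] using hxN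
  obtain ⟨φ, hφ⟩ := Module.Projective.exists_dual_ne_zero U hpx
  refine hφ (mem_bndClosure.mp hx (φ ∘ₗ W.subtype ∘ₗ W.projectionOnto N hNW.symm) ?_)
  exact fun y hy => by simp [(projectionOnto_apply_eq_zero_iff hNW.symm).mpr (hKN hy)]

end bndClosure

/-- let `U` be a von Neumann regular, left self-injective ring, `P` a
finitely generated projective `U`-module, and `K` a submodule of `P`. Then
`cl_bnd(K)` is a finitely generated projective direct summand of `P`, and it equals the
supremum, in the lattice of finitely generated submodules of `P`, of all finitely
generated submodules `Q` of `P` contained in `K` (i.e. it is the least finitely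
generated submodule of `P` containing every finitely generated `Q ≤ K`). -/
theorem bndClosure_fg_projective_direct_summand (U : Type) [Ring U]
    (hreg : ∀ a : U, ∃ x : U, a * x * a = a)
    (hinj : Module.Injective U U)
    (P : Type) [AddCommGroup P] [Module U P] [Module.Finite U P] [Module.Projective U P]
    (K : Submodule U P) :
    (bndClosure U K).FG ∧ Module.Projective U ↥(bndClosure U K) ∧
      (∃ q : Submodule U P, IsCompl (bndClosure U K) q) ∧
      IsLeast {N : Submodule U P | N.FG ∧
        ∀ Q : Submodule U P, Q.FG → Q ≤ K → Q ≤ N} (bndClosure U K) := by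
  obtain ⟨n, f, hf⟩ := Module.Finite.exists_fin' U P
  obtain ⟨s, hs⟩ := f.exists_rightInverse_of_surjective (range_eq_top.mpr hf)
  have : Module.Injective U P := Module.Injective.of_split s f hs
  obtain ⟨g, hg⟩ := exists_isProj_bndClosure hreg K
  have hC := hg.isCompl
  have hfg : (bndClosure U K).FG := CoFG.fg_of_isCompl hC.symm CoFG.of_finite
  refine ⟨hfg, projective_of_isCompl hC, ⟨_, hC⟩,
    ⟨hfg, fun Q _ hQK => hQK.trans (le_bndClosure K)⟩, ?_⟩
  rintro N ⟨hN, hQN⟩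
  obtain ⟨W, hW⟩ := fgComplemented_of_projective hreg N hN
  refine bndClosure_le_of_isCompl (fun k hk => ?_) hW
  exact hQN _ (fg_span_singleton k) ((span_singleton_le_iff_mem k K).mpr hk)
    (mem_span_singleton_self k)
end

section
/- Let U be the algebra of affiliated operators of a finite von Neumann algebra. Then every finitely generated U-module M splits as M = TM ⊕ PM, where TM is the largest submodule of M with dim_U(TM) = 0 and PM = M/TM is finitely generated projective. -/
open scoped ENNReal

/-- An abstraction of the pair `A ⊆ U = U(A)`, where `A` is a finite von Neumann algebra
(with a fixed normal faithful trace) and `U` is its algebra of affiliated operators,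
together with the trace-induced dimension functions on `A`- and on `U`-modules.
The fields record the facts used in the paper: `U` is the classical ring of quotients
of `A`, `U` is von Neumann regular and self-injective, and the dimensions are
isomorphism-invariant, additive on short exact sequences, continuous with respect to
suprema over finitely generated projective submodules, and faithful on finitely
generated projective modules. -/
structure AffiliatedOperatorsSetup (A U : Type) [Ring A] [Ring U] where
  /-- the inclusion of `A` into `U` -/
  incl : A →+* U
  incl_injective : Function.Injective incl
  /-- `U` is von Neumann regular -/
  regular : ∀ u : U, ∃ x : U, u * x * u = u
  /-- `U` is self-injective -/
  selfInjective : Module.Injective U U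
  /-- every element of `U` is a left fraction `s⁻¹ a` with `a, s ∈ A`, `s` regular:
  `U = Q_cl(A)` -/
  fraction : ∀ u : U, ∃ a s : A,
      (∀ b : A, s * b = 0 → b = 0) ∧ (∀ b : A, b * s = 0 → b = 0) ∧
      incl s * u = incl a
  /-- regular elements of `A` become invertible in `U` -/
  regularUnit : ∀ s : A, (∀ b : A, s * b = 0 → b = 0) → (∀ b : A, b * s = 0 → b = 0) →
      IsUnit (incl s)
  /-- the trace-induced dimension of an `A`-module -/
  dimA : ∀ (M : Type) [AddCommGroup M] [Module A M], ℝ≥0∞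
  /-- the trace-induced dimension of a `U`-module -/
  dimU : ∀ (M : Type) [AddCommGroup M] [Module U M], ℝ≥0∞
  dimA_congr : ∀ (M N : Type) [AddCommGroup M] [Module A M] [AddCommGroup N] [Module A N],
      (M ≃ₗ[A] N) → dimA M = dimA N
  dimU_congr : ∀ (M N : Type) [AddCommGroup M] [Module U M] [AddCommGroup N] [Module U N],
      (M ≃ₗ[U] N) → dimU M = dimU N
  dimA_add : ∀ (M : Type) [AddCommGroup M] [Module A M] (N : Submodule A M),
      dimA M = dimA ↥N + dimA (M ⧸ N)
  dimU_add : ∀ (M : Type) [AddCommGroup M] [Module U M] (N : Submodule U M),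
      dimU M = dimU ↥N + dimU (M ⧸ N)
  dimA_sup : ∀ (M : Type) [AddCommGroup M] [Module A M],
      dimA M = ⨆ (N : Submodule A M) (_ : N.FG ∧ Module.Projective A ↥N), dimA ↥N
  dimU_sup : ∀ (M : Type) [AddCommGroup M] [Module U M],
      dimU M = ⨆ (N : Submodule U M) (_ : N.FG ∧ Module.Projective U ↥N), dimU ↥N
  dimA_faithful : ∀ (M : Type) [AddCommGroup M] [Module A M],
      Module.Finite A M → Module.Projective A M → (dimA M = 0 ↔ Subsingleton M)
  dimU_faithful : ∀ (M : Type) [AddCommGroup M] [Module U M],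
      Module.Finite U M → Module.Projective U M → (dimU M = 0 ↔ Subsingleton M)

/-!
`TM` is itself zero-dimensional: zero-dimensional submodules are closed under sums, so a
finitely generated submodule of `TM` lies in one of them, and the dimension of a module is the
supremum over its finitely generated projective submodules. Hence `M / TM` has no nonzero
zero-dimensional submodule. Present it as `F / K` with `F = Uⁿ`, which is injective because `U`
is self-injective. If `K` is essential in some `E ≤ F`, every projective submodule of `E / K`
lifts to a submodule of `E` missing `K`, so it vanishes; thus `dim (E / K) = 0` and `E = K`.
A submodule of an injective module with no proper essential extension is a direct summand, so
`M / TM ≅ F / K` is projective, and then `TM` splits off `M`.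
-/

namespace Submodule

variable {R M : Type*} [Ring R] [AddCommGroup M] [Module R M]

def IsEssentialIn (N E : Submodule R M) : Prop :=
  ∀ W ≤ E, Disjoint W N → W = ⊥

theorem exists_isCompl_of_retraction {p : Submodule R M} (φ : M →ₗ[R] M)
    (hφ : ∀ x, φ x ∈ p) (hφp : ∀ x ∈ p, φ x = x) : ∃ q, IsCompl p q :=
  ⟨_, LinearMap.isCompl_of_proj (f := φ.codRestrict p hφ) fun x => Subtype.ext (hφp x x.2)⟩

theorem exists_isCompl_of_projective_quotient (p : Submodule R M)
    [Module.Projective R (M ⧸ p)] : ∃ q, IsCompl p q := by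
  obtain ⟨s, hs⟩ := Module.projective_lifting_property p.mkQ LinearMap.id p.mkQ_surjective
  have hs' (y : M ⧸ p) : p.mkQ (s y) = y := LinearMap.congr_fun hs y
  refine exists_isCompl_of_retraction (LinearMap.id - s ∘ₗ p.mkQ) (fun x => ?_) fun x hx => ?_
  · rw [← Quotient.mk_eq_zero, ← mkQ_apply]
    simp only [LinearMap.sub_apply, LinearMap.id_apply, LinearMap.comp_apply, map_sub, hs',
      sub_self]
  · simp [(Quotient.mk_eq_zero p).2 hx]

theorem exists_maximal_disjoint (N : Submodule R M) :
    ∃ C : Submodule R M, Maximal (Disjoint · N) C := by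
  obtain ⟨C, -, hC⟩ := zorn_le_nonempty₀ {C : Submodule R M | Disjoint C N}
    (fun c hc hchain _ _ => ⟨sSup c, (hchain.directedOn.disjoint_sSup_left).2 hc,
      fun _ => le_sSup⟩) ⊥ disjoint_bot_left
  exact ⟨C, hC⟩

theorem isEssentialIn_map_mkQ_of_maximal_disjoint {C N : Submodule R M}
    (hC : Maximal (Disjoint · N) C) : (N.map C.mkQ).IsEssentialIn ⊤ := by
  intro W _ hW
  have hdisj : Disjoint (W.comap C.mkQ) N := by
    refine disjoint_def.2 fun x hxW hxN => ?_
    have hx : C.mkQ x = 0 := disjoint_def.1 hW _ hxW (mem_map_of_mem hxN)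
    exact disjoint_def.1 hC.1 x ((Quotient.mk_eq_zero C).1 hx) hxN
  have hle : W.comap C.mkQ ≤ C := hC.2 hdisj fun x hx => by
    simp [mem_comap, (Quotient.mk_eq_zero C).2 hx]
  rw [← map_comap_eq_of_surjective C.mkQ_surjective W, ← le_bot_iff, map_le_iff_le_comap,
    comap_bot, ker_mkQ]
  exact hle

theorem exists_isCompl_of_forall_isEssentialIn_le [Module.Injective R M] {N : Submodule R M}
    (hN : ∀ E, N ≤ E → N.IsEssentialIn E → E ≤ N) : ∃ q, IsCompl N q := by
  obtain ⟨C, hC⟩ := exists_maximal_disjoint N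
  have hinj : Function.Injective (C.mkQ ∘ₗ N.subtype) := by
    rw [← LinearMap.ker_eq_bot, LinearMap.ker_comp, ker_mkQ, eq_bot_iff]
    intro x hx
    exact (mem_bot R).2 (Subtype.ext (disjoint_def.1 hC.1 _ hx x.2))
  obtain ⟨h, hh⟩ := Module.Injective.out (C.mkQ ∘ₗ N.subtype) hinj N.subtype
  -- `φ` is the identity on `N` and `N` is essential in its range, so `φ` projects onto `N`.
  set φ := h ∘ₗ C.mkQ
  have hφN (x) (hx : x ∈ N) : φ x = x := hh ⟨x, hx⟩
  have hess : N.IsEssentialIn (LinearMap.range φ) := by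
    intro W hW hWN
    have hbot : W.comap h = ⊥ := isEssentialIn_map_mkQ_of_maximal_disjoint hC _ le_top <| by
      refine disjoint_def.2 fun y hyW hyN => ?_
      obtain ⟨t, ht, rfl⟩ := mem_map.1 hyN
      rw [disjoint_def.1 hWN t (hφN t ht ▸ hyW) ht, map_zero]
    rw [← map_comap_eq_of_le (hW.trans (LinearMap.range_comp_le_range _ _)), hbot, map_bot]
  exact exists_isCompl_of_retraction φ
    (fun x => hN _ (fun x hx => LinearMap.mem_range.2 ⟨x, hφN x hx⟩) hess ⟨x, rfl⟩) hφN

theorem subsingleton_of_isEssentialIn {N E : Submodule R M} (hN : N.IsEssentialIn E)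
    {P : Type*} [AddCommGroup P] [Module R P] [Module.Projective R P]
    (g : P →ₗ[R] E.map N.mkQ) (hg : Function.Injective g) : Subsingleton P := by
  obtain ⟨s, hs⟩ := Module.projective_lifting_property (N.mkQ.submoduleMap E) g
    (N.mkQ.submoduleMap_surjective E)
  have hs' (p : P) : N.mkQ (s p) = g p := congrArg Subtype.val (LinearMap.congr_fun hs p)
  have hbot : LinearMap.range (E.subtype ∘ₗ s) = ⊥ := by
    refine hN _ (by rintro _ ⟨p, rfl⟩; exact (s p).2) (disjoint_def.2 ?_)
    rintro _ ⟨p, rfl⟩ hpN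
    have hg0 : g p = 0 := Subtype.ext <| by
      rw [← hs']
      exact (Quotient.mk_eq_zero N).2 hpN
    simp [hg.eq_iff' (map_zero g) |>.1 hg0]
  refine ⟨fun p q => hg ?_⟩
  have hs0 (p : P) : s p = 0 := Subtype.ext <| (mem_bot R).1 (hbot ▸ ⟨p, rfl⟩)
  rw [← LinearMap.congr_fun hs p, ← LinearMap.congr_fun hs q, LinearMap.comp_apply,
    LinearMap.comp_apply, hs0, hs0]

end Submodule

namespace AffiliatedOperatorsSetup

variable {A U : Type} [Ring A] [Ring U] (S : AffiliatedOperatorsSetup A U)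
variable {M N : Type} [AddCommGroup M] [Module U M] [AddCommGroup N] [Module U N]

open Submodule

theorem dimU_eq_zero_of_subsingleton [Subsingleton M] : S.dimU M = 0 :=
  (S.dimU_faithful M inferInstance inferInstance).2 ‹_›

theorem dimU_le_of_injective (f : M →ₗ[U] N) (hf : Function.Injective f) :
    S.dimU M ≤ S.dimU N := by
  rw [S.dimU_congr _ _ (LinearEquiv.ofInjective f hf), S.dimU_add N (LinearMap.range f)]
  exact le_self_add

theorem dimU_mono {p q : Submodule U M} (h : p ≤ q) : S.dimU p ≤ S.dimU q :=
  S.dimU_le_of_injective (inclusion h) (inclusion_injective h)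

theorem dimU_quotient_le (p : Submodule U M) : S.dimU (M ⧸ p) ≤ S.dimU M := by
  rw [S.dimU_add M p]
  exact le_add_self

theorem dimU_eq_dimU_ker_add_dimU_range (f : M →ₗ[U] N) :
    S.dimU M = S.dimU (LinearMap.ker f) + S.dimU (LinearMap.range f) := by
  rw [S.dimU_add M (LinearMap.ker f), S.dimU_congr _ _ f.quotKerEquivRange]

theorem dimU_sup_le (p q : Submodule U M) : S.dimU ↥(p ⊔ q) ≤ S.dimU p + S.dimU q := by
  rw [S.dimU_add ↥(p ⊔ q) (q.comap (p ⊔ q).subtype),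
    S.dimU_congr _ _ (comapSubtypeEquivOfLe (le_sup_right : q ≤ p ⊔ q)),
    ← S.dimU_congr _ _ (LinearMap.quotientInfEquivSupQuotient p q), add_comm]
  gcongr
  exact S.dimU_quotient_le (M := p) _

theorem dimU_eq_zero_of_forall_fg_projective
    (h : ∀ P : Submodule U M, P.FG → Module.Projective U P → S.dimU P = 0) :
    S.dimU M = 0 := by
  rw [S.dimU_sup, ENNReal.iSup_eq_zero]
  exact fun P => ENNReal.iSup_eq_zero.2 fun hP => h P hP.1 hP.2

theorem dimU_map_mkQ_eq_zero_of_isEssentialIn {N E : Submodule U M} (hN : N.IsEssentialIn E) :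
    S.dimU (E.map N.mkQ) = 0 := by
  refine S.dimU_eq_zero_of_forall_fg_projective fun P _ _ => ?_
  have := subsingleton_of_isEssentialIn (P := P) hN P.subtype P.injective_subtype
  exact S.dimU_eq_zero_of_subsingleton

/-- The paper's `TM`. -/
def torsion (M : Type) [AddCommGroup M] [Module U M] : Submodule U M :=
  sSup {N : Submodule U M | S.dimU N = 0}

theorem le_torsion {N : Submodule U M} (hN : S.dimU N = 0) : N ≤ S.torsion M :=
  le_sSup hN

theorem dimU_torsion : S.dimU (S.torsion M) = 0 := by
  set Z := {N : Submodule U M | S.dimU N = 0}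
  have hZ : DirectedOn (· ≤ ·) Z := fun p hp q hq =>
    ⟨p ⊔ q, le_antisymm ((S.dimU_sup_le p q).trans_eq (by rw [hp, hq, add_zero])) zero_le,
      le_sup_left, le_sup_right⟩
  refine S.dimU_eq_zero_of_forall_fg_projective fun P hP _ => ?_
  obtain ⟨N, hN, hPN⟩ :=
    (CompleteLattice.isCompactElement_iff_le_of_directed_sSup_le _ _).1
      ((fg_iff_compact _).1 (hP.map (S.torsion M).subtype)) Z
      ⟨⊥, S.dimU_eq_zero_of_subsingleton⟩ hZ (map_subtype_le _ P)
  rw [S.dimU_congr _ _ (equivMapOfInjective _ (injective_subtype _) P)]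
  exact le_antisymm ((S.dimU_mono hPN).trans_eq hN) zero_le

def IsDimTorsionFree (M : Type) [AddCommGroup M] [Module U M] : Prop :=
  ∀ N : Submodule U M, S.dimU N = 0 → N = ⊥

theorem IsDimTorsionFree.of_equiv (e : M ≃ₗ[U] N) (h : S.IsDimTorsionFree N) :
    S.IsDimTorsionFree M := fun P hP => by
  have hbot := h _ ((S.dimU_congr _ _ (e.submoduleMap P)).symm.trans hP)
  rwa [Submodule.map_eq_bot_iff] at hbot

theorem isDimTorsionFree_quotient_torsion : S.IsDimTorsionFree (M ⧸ S.torsion M) := by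
  set T := S.torsion M
  intro P hP
  set f := T.mkQ.domRestrict (P.comap T.mkQ)
  have hker : S.dimU (LinearMap.ker f) = 0 := by
    have hT : T ≤ P.comap T.mkQ := fun x hx => by simp [(Quotient.mk_eq_zero T).2 hx]
    rw [LinearMap.ker_domRestrict, ker_mkQ, S.dimU_congr _ _ (comapSubtypeEquivOfLe hT),
      S.dimU_torsion]
  have hrange : LinearMap.range f = P := by
    rw [LinearMap.range_domRestrict, map_comap_eq_of_surjective T.mkQ_surjective]
  have hle : P.comap T.mkQ ≤ T :=
    S.le_torsion (by rw [S.dimU_eq_dimU_ker_add_dimU_range f, hker, hrange, hP, add_zero])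
  rw [← map_comap_eq_of_surjective T.mkQ_surjective P, ← le_bot_iff, map_le_iff_le_comap,
    comap_bot, ker_mkQ]
  exact hle

theorem exists_isCompl_of_isDimTorsionFree_quotient [Module.Injective U M] (N : Submodule U M)
    (h : S.IsDimTorsionFree (M ⧸ N)) : ∃ q, IsCompl N q :=
  exists_isCompl_of_forall_isEssentialIn_le fun E _ hE => by
    have hbot := h _ (S.dimU_map_mkQ_eq_zero_of_isEssentialIn hE)
    rwa [← le_bot_iff, map_le_iff_le_comap, comap_bot, ker_mkQ] at hbot

theorem projective_of_isDimTorsionFree [Module.Finite U M] (h : S.IsDimTorsionFree M) :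
    Module.Projective U M := by
  obtain ⟨n, π, hπ⟩ := Module.Finite.exists_fin' U M
  let e := π.quotKerEquivOfSurjective hπ
  have := S.selfInjective
  obtain ⟨C, hC⟩ := S.exists_isCompl_of_isDimTorsionFree_quotient _ (h.of_equiv S e)
  have : Module.Projective U C := Module.Projective.of_split C.subtype
    (projectionOnto C _ hC.symm) (by ext; simp [projectionOnto_apply_left])
  exact Module.Projective.of_equiv ((quotientEquivOfIsCompl _ _ hC).symm.trans e)

end AffiliatedOperatorsSetup

/-- let `U` be the algebra of affiliated operators of a finite von Neumann
algebra `A`. Every finitely generated `U`-module `M` splits as `M = TM ⊕ PM`, where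
`TM` is the largest submodule of `M` with `dim_U(TM) = 0` and `PM = M / TM` is finitely
generated projective. -/
theorem fg_module_splits_torsion_projective (A U : Type) [Ring A] [Ring U]
    (S : AffiliatedOperatorsSetup A U)
    (M : Type) [AddCommGroup M] [Module U M] [Module.Finite U M] :
    ∃ T : Submodule U M,
      S.dimU ↥T = 0 ∧ (∀ N : Submodule U M, S.dimU ↥N = 0 → N ≤ T) ∧
      (∃ q : Submodule U M, IsCompl T q) ∧
      Module.Finite U (M ⧸ T) ∧ Module.Projective U (M ⧸ T) := by
  have := S.projective_of_isDimTorsionFree (S.isDimTorsionFree_quotient_torsion (M := M))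
  exact ⟨S.torsion M, S.dimU_torsion, fun _ => S.le_torsion,
    (S.torsion M).exists_isCompl_of_projective_quotient, inferInstance, inferInstance⟩
end
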